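/- Assume d ≥ 3, R is positive definite and Q is positive semidefinite, and let N ≥ d. Then for every r with 2 ≤ r ≤ d−1, all modes i_1, i_2, …, i_{r−1} ∈ {1,…,L}, every mode i ∈ {1,…,L}, and every integer k with 0 ≤ k ≤ N−d+1, the CDRE and α quantities satisfy: (1) Σ_{j=1}^{L} λ_{i_1 j} A_j′ α^{d−r}_{(j, i_1, i_2, …, i_{r−1})}(k, N)′ = α^{d−r+1}_{(i_1, i_2, …, i_{r−1})}(k−1, N)′; and (2) E_i^{(r)}[ B_{j_r}′ α^{d−r}_{(j_r, j_{r−1}, …, j_1)}(k, N)′ ] = T_i^r(k−r, N)′, where the expectation is over mode paths (j_1,…,j_r) starting from i. -/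

import Mathlib

open MeasureTheory Filter Matrix Topology
open scoped ENNReal

noncomputable section

/-- The data of a Markov jump linear system with input delay:
dimensions `n, m`, number of modes `L`, delay `d`, mode matrices `A, B`,
symmetric weight matrices `Q, R`, and a row-stochastic transition matrix `Pr`. -/
structure MJParams where
  n : ℕ
  m : ℕ
  L : ℕ
  d : ℕ
  hn : 0 < n
  hm : 0 < m
  hL : 0 < L
  hd : 0 < d
  A : Fin L → Matrix (Fin n) (Fin n) ℝ
  B : Fin L → Matrix (Fin n) (Fin m) ℝ
  Q : Matrix (Fin n) (Fin n) ℝ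
  R : Matrix (Fin m) (Fin m) ℝ
  Pr : Matrix (Fin L) (Fin L) ℝ
  hQsymm : Q.IsSymm
  hRsymm : R.IsSymm
  hPrnonneg : ∀ i j, 0 ≤ Pr i j
  hPrrow : ∀ i, ∑ j, Pr i j = 1

namespace MJParams

variable (S : MJParams)

/-- Probability weight `λ_{i j₁} λ_{j₁ j₂} ⋯ λ_{j_{s-1} j_s}` of the mode path
`j = (j₁, …, j_s)` (0-indexed) started from mode `i`. -/
def pw (i : Fin S.L) {s : ℕ} (j : Fin s → Fin S.L) : ℝ :=
  ∏ t : Fin s,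
    S.Pr (if _ : (t : ℕ) = 0 then i
          else j ⟨(t : ℕ) - 1, lt_of_le_of_lt (Nat.sub_le _ _) t.isLt⟩) (j t)

/-- `E_i^{(s)}[f]`: expectation of a (matrix-valued) function of mode paths of length `s`
started from mode `i`. -/
def expect (i : Fin S.L) (s : ℕ) {α : Type*} [AddCommMonoid α] [Module ℝ α]
    (f : (Fin s → Fin S.L) → α) : α :=
  ∑ j : Fin s → Fin S.L, S.pw i j • f j

def dflt : Fin S.L := ⟨0, S.hL⟩

/-- Entry `q` (0-indexed) of a mode path, i.e. `j_{q+1}` in 1-indexed notation. -/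
def pget {s : ℕ} (j : Fin s → Fin S.L) (q : ℕ) : Fin S.L :=
  if h : q < s then j ⟨q, h⟩ else S.dflt

def Aget {s : ℕ} (j : Fin s → Fin S.L) (q : ℕ) : Matrix (Fin S.n) (Fin S.n) ℝ :=
  S.A (S.pget j q)

def Bget {s : ℕ} (j : Fin s → Fin S.L) (q : ℕ) : Matrix (Fin S.n) (Fin S.m) ℝ :=
  S.B (S.pget j q)

/-- The product `A_{j (a+c-1)} * ⋯ * A_{j a}` along a mode path (identity when `c = 0`). -/
def Aprod {s : ℕ} (j : Fin s → Fin S.L) (a c : ℕ) : Matrix (Fin S.n) (Fin S.n) ℝ :=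
  ((List.range c).map (fun t => S.Aget j (a + c - 1 - t))).prod

end MJParams

/-- The coupled difference Riccati equation (CDRE) with zero terminal data, horizon `N`.
The matrix inverse `(W _ _)⁻¹` is Mathlib's matrix inverse (which is the genuine inverse
whenever the matrix is invertible). -/
structure CDRE (S : MJParams) (N : ℤ) where
  P : Fin S.L → ℤ → Matrix (Fin S.n) (Fin S.n) ℝ
  P0 : Fin S.L → ℤ → Matrix (Fin S.n) (Fin S.n) ℝ
  W : Fin S.L → ℤ → Matrix (Fin S.m) (Fin S.m) ℝ
  T0 : Fin S.L → ℤ → Matrix (Fin S.m) (Fin S.n) ℝ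
  T : ℕ → Fin S.L → ℤ → Matrix (Fin S.m) (Fin S.m) ℝ
  hPterm : ∀ i, P i N = 0
  hP0term : ∀ i, ∀ t : ℤ, 0 ≤ t → t ≤ (S.d : ℤ) - 1 → P0 i (N - t) = 0
  hT0term : ∀ i, ∀ t : ℤ, 0 ≤ t → t ≤ (S.d : ℤ) - 1 → T0 i (N - t) = 0
  hTterm : ∀ r : ℕ, 1 ≤ r → r ≤ S.d - 1 → ∀ i, ∀ t : ℤ, 0 ≤ t → t ≤ (S.d : ℤ) - 1 →
    T r i (N - t) = 0
  hP : ∀ i, ∀ k : ℤ, 0 ≤ k → k ≤ N →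
    P i (k - 1) = ∑ j, S.Pr i j • (S.Q + (S.A j)ᵀ * (P j k - P0 j k) * S.A j)
  hP0 : ∀ i, ∀ k : ℤ, 0 ≤ k → k ≤ N →
    P0 i (k - 1) = (T0 i (k - 1))ᵀ * (W i (k - 1))⁻¹ * T0 i (k - 1)
  hW : ∀ i, ∀ k : ℤ, 0 ≤ k → k ≤ N →
    W i (k - S.d) =
      S.expect i S.d (fun j =>
        (S.Bget j (S.d - 1))ᵀ * (P (S.pget j (S.d - 1)) k - P0 (S.pget j (S.d - 1)) k) *
          S.Bget j (S.d - 1) + S.R)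
      - ∑ s ∈ Finset.Icc 1 (S.d - 1),
          S.expect i (S.d - s) (fun j =>
            (T s (S.pget j (S.d - s - 1)) (k - s))ᵀ * (W (S.pget j (S.d - s - 1)) (k - s))⁻¹ *
              T s (S.pget j (S.d - s - 1)) (k - s))
  hT0 : ∀ i, ∀ k : ℤ, 0 ≤ k → k ≤ N →
    T0 i (k - S.d) =
      S.expect i S.d (fun j =>
        (S.Bget j (S.d - 1))ᵀ * (P (S.pget j (S.d - 1)) k - P0 (S.pget j (S.d - 1)) k) *
          S.Aprod j 0 S.d)
      - ∑ s ∈ Finset.Icc 1 (S.d - 1),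
          S.expect i (S.d - s) (fun j =>
            (T s (S.pget j (S.d - s - 1)) (k - s))ᵀ * (W (S.pget j (S.d - s - 1)) (k - s))⁻¹ *
              T0 (S.pget j (S.d - s - 1)) (k - s) * S.Aprod j 0 (S.d - s))
  hT : ∀ r : ℕ, 1 ≤ r → r ≤ S.d - 1 → ∀ i, ∀ k : ℤ, 0 ≤ k → k ≤ N →
    T r i (k - S.d) =
      S.expect i S.d (fun j =>
        (S.Bget j (S.d - 1))ᵀ * (P (S.pget j (S.d - 1)) k - P0 (S.pget j (S.d - 1)) k) *
          (S.Aprod j r (S.d - r) * S.Bget j (r - 1)))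
      - ∑ s ∈ Finset.Icc 1 (S.d - r),
          S.expect i (S.d - s) (fun j =>
            (T s (S.pget j (S.d - s - 1)) (k - s))ᵀ * (W (S.pget j (S.d - s - 1)) (k - s))⁻¹ *
              T0 (S.pget j (S.d - s - 1)) (k - s) * (S.Aprod j r (S.d - s - r) * S.Bget j (r - 1)))
      - ∑ s ∈ Finset.Icc (S.d - r + 1) (S.d - 1),
          S.expect i (S.d - s) (fun j =>
            (T s (S.pget j (S.d - s - 1)) (k - s))ᵀ * (W (S.pget j (S.d - s - 1)) (k - s))⁻¹ *
              T (s - (S.d - r)) (S.pget j (S.d - s - 1)) (k - s))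

/-- The CDRE together with the auxiliary quantities `δ` and (path-indexed) `α`. -/
structure CDREX (S : MJParams) (N : ℤ) extends CDRE S N where
  δ : ℕ → Fin S.L → ℤ → Matrix (Fin S.m) (Fin S.n) ℝ
  α : (s : ℕ) → (Fin s → Fin S.L) → ℤ → Matrix (Fin S.m) (Fin S.n) ℝ
  hδterm : ∀ r i, ∀ t : ℤ, N - 1 ≤ t → δ r i t = 0
  hδ1 : 1 ≤ S.d - 1 → ∀ i, ∀ k : ℤ, 0 ≤ k → k ≤ N →
    (δ 1 i (k - 1))ᵀ = (∑ j, S.Pr i j • ((S.A j)ᵀ * (P j k - P0 j k) * S.B j))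
      - (T0 i (k - 1))ᵀ * (W i (k - 1))⁻¹ * T 1 i (k - 1)
  hδr : ∀ r : ℕ, 2 ≤ r → r ≤ S.d - 1 → ∀ i, ∀ k : ℤ, 0 ≤ k → k ≤ N →
    (δ r i (k - 1))ᵀ = (∑ j, S.Pr i j • ((S.A j)ᵀ * (δ (r - 1) j k)ᵀ))
      - (T0 i (k - 1))ᵀ * (W i (k - 1))⁻¹ * T r i (k - 1)
  hα1 : 1 ≤ S.d - 1 → ∀ (p : Fin 1 → Fin S.L) (t : ℤ), α 1 p t = δ (S.d - 1) (p 0) t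
  hαj : ∀ jj : ℕ, 2 ≤ jj → jj ≤ S.d - 1 → ∀ (p : Fin jj → Fin S.L), ∀ k : ℤ, 0 ≤ k → k ≤ N →
    (α jj p (k - 1))ᵀ = (δ (S.d - jj) (S.pget p 0) (k - 1))ᵀ
      - ∑ s ∈ Finset.Icc 1 (jj - 1),
          (α s (fun t : Fin s => S.pget p (t : ℕ)) (k - 1))ᵀ *
            (W (S.pget p s) (k - 1 - s))⁻¹ * T (S.d - jj + s) (S.pget p s) (k - 1 - s)

/-- The matrix `Ω_{(i₁,…,i_d)}(t, N)` associated with a solution of the CDRE. -/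
def CDREX.Omega {S : MJParams} {N : ℤ} (c : CDREX S N) (p : Fin S.d → Fin S.L) (t : ℤ) :
    Matrix (Fin S.n) (Fin S.n) ℝ :=
  (c.P (S.pget p 0) t - c.P0 (S.pget p 0) t)
    - ∑ s ∈ Finset.Icc 1 (S.d - 1),
        (c.α s (fun r : Fin s => S.pget p (r : ℕ)) t)ᵀ * (c.W (S.pget p s) (t - s))⁻¹ *
          c.α s (fun r : Fin s => S.pget p (r : ℕ)) t

/-- The coupled algebraic Riccati equation (CARE): the stationary version of the CDRE,
with every `W i` invertible. -/
structure CARE (S : MJParams) where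
  P : Fin S.L → Matrix (Fin S.n) (Fin S.n) ℝ
  P0 : Fin S.L → Matrix (Fin S.n) (Fin S.n) ℝ
  W : Fin S.L → Matrix (Fin S.m) (Fin S.m) ℝ
  T0 : Fin S.L → Matrix (Fin S.m) (Fin S.n) ℝ
  T : ℕ → Fin S.L → Matrix (Fin S.m) (Fin S.m) ℝ
  δ : ℕ → Fin S.L → Matrix (Fin S.m) (Fin S.n) ℝ
  α : (s : ℕ) → (Fin s → Fin S.L) → Matrix (Fin S.m) (Fin S.n) ℝ
  hWunit : ∀ i, IsUnit (W i)
  hP : ∀ i, P i = ∑ j, S.Pr i j • (S.Q + (S.A j)ᵀ * (P j - P0 j) * S.A j)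
  hP0 : ∀ i, P0 i = (T0 i)ᵀ * (W i)⁻¹ * T0 i
  hW : ∀ i, W i =
      S.expect i S.d (fun j =>
        (S.Bget j (S.d - 1))ᵀ * (P (S.pget j (S.d - 1)) - P0 (S.pget j (S.d - 1))) *
          S.Bget j (S.d - 1) + S.R)
      - ∑ s ∈ Finset.Icc 1 (S.d - 1),
          S.expect i (S.d - s) (fun j =>
            (T s (S.pget j (S.d - s - 1)))ᵀ * (W (S.pget j (S.d - s - 1)))⁻¹ *
              T s (S.pget j (S.d - s - 1)))
  hT0 : ∀ i, T0 i =
      S.expect i S.d (fun j =>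
        (S.Bget j (S.d - 1))ᵀ * (P (S.pget j (S.d - 1)) - P0 (S.pget j (S.d - 1))) *
          S.Aprod j 0 S.d)
      - ∑ s ∈ Finset.Icc 1 (S.d - 1),
          S.expect i (S.d - s) (fun j =>
            (T s (S.pget j (S.d - s - 1)))ᵀ * (W (S.pget j (S.d - s - 1)))⁻¹ *
              T0 (S.pget j (S.d - s - 1)) * S.Aprod j 0 (S.d - s))
  hT : ∀ r : ℕ, 1 ≤ r → r ≤ S.d - 1 → ∀ i, T r i =
      S.expect i S.d (fun j =>
        (S.Bget j (S.d - 1))ᵀ * (P (S.pget j (S.d - 1)) - P0 (S.pget j (S.d - 1))) *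
          (S.Aprod j r (S.d - r) * S.Bget j (r - 1)))
      - ∑ s ∈ Finset.Icc 1 (S.d - r),
          S.expect i (S.d - s) (fun j =>
            (T s (S.pget j (S.d - s - 1)))ᵀ * (W (S.pget j (S.d - s - 1)))⁻¹ *
              T0 (S.pget j (S.d - s - 1)) * (S.Aprod j r (S.d - s - r) * S.Bget j (r - 1)))
      - ∑ s ∈ Finset.Icc (S.d - r + 1) (S.d - 1),
          S.expect i (S.d - s) (fun j =>
            (T s (S.pget j (S.d - s - 1)))ᵀ * (W (S.pget j (S.d - s - 1)))⁻¹ *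
              T (s - (S.d - r)) (S.pget j (S.d - s - 1)))
  hδ1 : 1 ≤ S.d - 1 → ∀ i,
    (δ 1 i)ᵀ = (∑ j, S.Pr i j • ((S.A j)ᵀ * (P j - P0 j) * S.B j))
      - (T0 i)ᵀ * (W i)⁻¹ * T 1 i
  hδr : ∀ r : ℕ, 2 ≤ r → r ≤ S.d - 1 → ∀ i,
    (δ r i)ᵀ = (∑ j, S.Pr i j • ((S.A j)ᵀ * (δ (r - 1) j)ᵀ))
      - (T0 i)ᵀ * (W i)⁻¹ * T r i
  hα1 : 1 ≤ S.d - 1 → ∀ (p : Fin 1 → Fin S.L), α 1 p = δ (S.d - 1) (p 0)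
  hαj : ∀ jj : ℕ, 2 ≤ jj → jj ≤ S.d - 1 → ∀ (p : Fin jj → Fin S.L),
    (α jj p)ᵀ = (δ (S.d - jj) (S.pget p 0))ᵀ
      - ∑ s ∈ Finset.Icc 1 (jj - 1),
          (α s (fun t : Fin s => S.pget p (t : ℕ)))ᵀ * (W (S.pget p s))⁻¹ *
            T (S.d - jj + s) (S.pget p s)

/-- The matrix `Ω_{(i₁,…,i_d)}` associated with a solution of the CARE. -/
def CARE.Omega {S : MJParams} (c : CARE S) (p : Fin S.d → Fin S.L) :
    Matrix (Fin S.n) (Fin S.n) ℝ :=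
  (c.P (S.pget p 0) - c.P0 (S.pget p 0))
    - ∑ s ∈ Finset.Icc 1 (S.d - 1),
        (c.α s (fun r : Fin s => S.pget p (r : ℕ)))ᵀ * (c.W (S.pget p s))⁻¹ *
          c.α s (fun r : Fin s => S.pget p (r : ℕ))

/-- A probability space carrying a time-homogeneous Markov chain with values in
`{1,…,L}` and transition matrix `Pr`. -/
structure MarkovChain (S : MJParams) (Ω : Type) [MeasurableSpace Ω] where
  μ : Measure Ω
  hμ : IsProbabilityMeasure μ
  θ : ℕ → Ω → Fin S.L
  hθ : ∀ k, Measurable (θ k)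
  hmarkov : ∀ (k : ℕ) (i : ℕ → Fin S.L) (j : Fin S.L),
    0 < μ (⋂ t ∈ Finset.range (k + 1), {ω | θ t ω = i t}) →
    μ ({ω | θ (k + 1) ω = j} ∩ ⋂ t ∈ Finset.range (k + 1), {ω | θ t ω = i t})
      = ENNReal.ofReal (S.Pr (i k) j) * μ (⋂ t ∈ Finset.range (k + 1), {ω | θ t ω = i t})

/-- The σ-algebra `G_k` generated by `θ(0), …, θ(k)`. -/
def MarkovChain.G {S : MJParams} {Ω : Type} [MeasurableSpace Ω] (M : MarkovChain S Ω) (k : ℕ) : MeasurableSpace Ω :=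
  ⨆ t ∈ Finset.range (k + 1), MeasurableSpace.comap (M.θ t) ⊤

/-- The state trajectory of the MJLS with input delay, given initial state `x0` and
input process `u` (defined for all integer times; negative times carry the initial inputs). -/
def traj (S : MJParams) {Ω : Type} [MeasurableSpace Ω] (M : MarkovChain S Ω) (x0 : Fin S.n → ℝ)
    (u : ℤ → Ω → Fin S.m → ℝ) : ℕ → Ω → Fin S.n → ℝ
  | 0 => fun _ => x0
  | k + 1 => fun ω =>
      (S.A (M.θ k ω)).mulVec (traj S M x0 u k ω)
        + (S.B (M.θ k ω)).mulVec (u ((k : ℤ) - S.d) ω)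

/-- The input process `u` carries the prescribed initial data on `[-d, -1]`. -/
def HasInit (S : MJParams) {Ω : Type} [MeasurableSpace Ω] (M : MarkovChain S Ω) (uinit : ℤ → Fin S.m → ℝ)
    (u : ℤ → Ω → Fin S.m → ℝ) : Prop :=
  ∀ t : ℤ, -(S.d : ℤ) ≤ t → t < 0 → u t = fun _ => uinit t

/-- `u` is the closed loop input under the delayed feedback
`u(k) = -K⁰_{θ(k)} x(k) - ∑_{r=1}^{d-1} K^r_{θ(k)} u(k+r-d)`. -/
def IsFeedback (S : MJParams) {Ω : Type} [MeasurableSpace Ω] (M : MarkovChain S Ω)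
    (K0 : Fin S.L → Matrix (Fin S.m) (Fin S.n) ℝ)
    (K : ℕ → Fin S.L → Matrix (Fin S.m) (Fin S.m) ℝ)
    (x0 : Fin S.n → ℝ) (uinit : ℤ → Fin S.m → ℝ)
    (u : ℤ → Ω → Fin S.m → ℝ) : Prop :=
  HasInit S M uinit u ∧
  ∀ k : ℕ, u (k : ℤ) = fun ω =>
    -((K0 (M.θ k ω)).mulVec (traj S M x0 u k ω))
      - ∑ r ∈ Finset.Icc 1 (S.d - 1), (K r (M.θ k ω)).mulVec (u ((k : ℤ) + r - S.d) ω)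

/-- Mean square stabilizability of the MJLS with input delay. -/
def MJParams.MSStabilizable (S : MJParams) : Prop :=
  ∃ (K0 : Fin S.L → Matrix (Fin S.m) (Fin S.n) ℝ)
    (K : ℕ → Fin S.L → Matrix (Fin S.m) (Fin S.m) ℝ),
    ∀ {Ω : Type} [MeasurableSpace Ω] (M : MarkovChain S Ω) (x0 : Fin S.n → ℝ) (uinit : ℤ → Fin S.m → ℝ)
      (u : ℤ → Ω → Fin S.m → ℝ), IsFeedback S M K0 K x0 uinit u →
      Tendsto (fun k : ℕ => ∫ ω, (∑ i, (traj S M x0 u k ω i) ^ 2) ∂M.μ) atTop (𝓝 0)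

/-- The uncontrolled trajectory `x(k+1) = A_{θ(k)} x(k)`. -/
def trajU (S : MJParams) {Ω : Type} [MeasurableSpace Ω] (M : MarkovChain S Ω) (x0 : Fin S.n → ℝ) :
    ℕ → Ω → Fin S.n → ℝ
  | 0 => fun _ => x0
  | k + 1 => fun ω => (S.A (M.θ k ω)).mulVec (trajU S M x0 k ω)

/-- Exact observability of `(A, C)`. -/
def MJParams.ExactlyObservable (S : MJParams) {p : ℕ}
    (C : Matrix (Fin p) (Fin S.n) ℝ) : Prop :=
  ∀ N : ℕ, S.n ≤ N → ∀ {Ω : Type} [MeasurableSpace Ω] (M : MarkovChain S Ω) (i0 : Fin S.L),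
    M.μ {ω | M.θ 0 ω = i0} = 1 →
    ∀ x0 : Fin S.n → ℝ,
      (∀ k ≤ N, ∀ᵐ ω ∂M.μ, C.mulVec (trajU S M x0 k ω) = 0) → x0 = 0

/-- `u` is the closed-loop input under the stationary feedback controller `u*` built from a
CARE solution. -/
def IsCareFeedback (S : MJParams) {Ω : Type} [MeasurableSpace Ω] (M : MarkovChain S Ω) (c : CARE S)
    (x0 : Fin S.n → ℝ) (uinit : ℤ → Fin S.m → ℝ)
    (u : ℤ → Ω → Fin S.m → ℝ) : Prop :=
  HasInit S M uinit u ∧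
  ∀ k : ℕ, u (k : ℤ) = fun ω =>
    -(((c.W (M.θ k ω))⁻¹ * c.T0 (M.θ k ω) * S.A (M.θ k ω)).mulVec (traj S M x0 u k ω))
      - ((c.W (M.θ k ω))⁻¹ * c.T0 (M.θ k ω) * S.B (M.θ k ω)).mulVec (u ((k : ℤ) - S.d) ω)
      - ∑ j ∈ Finset.Icc 1 (S.d - 1),
          ((c.W (M.θ k ω))⁻¹ * c.T j (M.θ k ω)).mulVec (u ((k : ℤ) - S.d + j) ω)

/-- The infinite-horizon cost `J(u)` (valued in `ℝ≥0∞`). -/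
def Jinf (S : MJParams) {Ω : Type} [MeasurableSpace Ω] (M : MarkovChain S Ω) (x0 : Fin S.n → ℝ)
    (u : ℤ → Ω → Fin S.m → ℝ) : ℝ≥0∞ :=
  (∑' k : ℕ, ENNReal.ofReal
      (∫ ω, (traj S M x0 u k ω) ⬝ᵥ (S.Q.mulVec (traj S M x0 u k ω)) ∂M.μ))
  + ∑' k : ℕ, ENNReal.ofReal
      (∫ ω, (u (k : ℤ) ω) ⬝ᵥ (S.R.mulVec (u (k : ℤ) ω)) ∂M.μ)

/-- The finite-horizon cost `J_N(u)`. -/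
def Jfin (S : MJParams) {Ω : Type} [MeasurableSpace Ω] (M : MarkovChain S Ω) (N : ℕ) (x0 : Fin S.n → ℝ)
    (u : ℤ → Ω → Fin S.m → ℝ) : ℝ :=
  ∫ ω, ((∑ k ∈ Finset.range (N + 1),
        (traj S M x0 u k ω) ⬝ᵥ (S.Q.mulVec (traj S M x0 u k ω)))
      + ∑ k ∈ Finset.Icc S.d N,
        (u ((k : ℤ) - S.d) ω) ⬝ᵥ (S.R.mulVec (u ((k : ℤ) - S.d) ω))) ∂M.μ

/-- The Lyapunov functional `V(k)` associated with a CARE solution and an input process. -/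
def Vfun (S : MJParams) {Ω : Type} [MeasurableSpace Ω] (M : MarkovChain S Ω) (c : CARE S) (x0 : Fin S.n → ℝ)
    (u : ℤ → Ω → Fin S.m → ℝ) (k : ℕ) : ℝ :=
  (∫ ω, (traj S M x0 u k ω) ⬝ᵥ
      ((c.P (M.θ (k - 1) ω) - c.P0 (M.θ (k - 1) ω)).mulVec (traj S M x0 u k ω)) ∂M.μ)
  - ∑ s ∈ Finset.Icc 1 (S.d - 1),
      ∫ ω,
        (condExp (M.G (k - s - 1)) M.μ
            (fun ω' => (c.α s (fun t : Fin s => M.θ (k - 1 - (t : ℕ)) ω')).mulVec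
              (traj S M x0 u k ω')) ω)
          ⬝ᵥ ((c.W (M.θ (k - s - 1) ω))⁻¹.mulVec
            (condExp (M.G (k - s - 1)) M.μ
              (fun ω' => (c.α s (fun t : Fin s => M.θ (k - 1 - (t : ℕ)) ω')).mulVec
                (traj S M x0 u k ω')) ω)) ∂M.μ

/-- Index type for the augmented state `col(x(k), u(k-1), …, u(k-d))`:
`inl` is the state block (block `0`), `inr (t, ·)` is block `t+1` (holding `u(k-t-1)`). -/
abbrev AugIx (S : MJParams) : Type := Fin S.n ⊕ (Fin S.d × Fin S.m)

/-- The augmented system matrix `Ā_i`. -/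
def Abar (S : MJParams) (i : Fin S.L) : Matrix (AugIx S) (AugIx S) ℝ :=
  Matrix.of fun a b =>
    match a, b with
    | Sum.inl a, Sum.inl b => S.A i a b
    | Sum.inl a, Sum.inr (t, b) => if (t : ℕ) = S.d - 1 then S.B i a b else 0
    | Sum.inr _, Sum.inl _ => 0
    | Sum.inr (t, a), Sum.inr (s, b) => if (t : ℕ) = (s : ℕ) + 1 ∧ a = b then 1 else 0

/-- The augmented input matrix `B̄`. -/
def Bbar (S : MJParams) : Matrix (AugIx S) (Fin S.m) ℝ :=
  Matrix.of fun a b =>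
    match a with
    | Sum.inl _ => 0
    | Sum.inr (t, a) => if (t : ℕ) = 0 ∧ a = b then 1 else 0

/-- The augmented weight matrix `Q̄ = diag(Q, 0, …, 0)`. -/
def Qbar (S : MJParams) : Matrix (AugIx S) (AugIx S) ℝ :=
  Matrix.of fun a b =>
    match a, b with
    | Sum.inl a, Sum.inl b => S.Q a b
    | _, _ => 0

/-- The augmented coupled Riccati recursion with horizon `N`. -/
structure AugRic (S : MJParams) (N : ℕ) where
  Pb : Fin S.L → ℕ → Matrix (AugIx S) (AugIx S) ℝ
  hterm : ∀ i, Pb i (N + 1) = 0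
  hrec : ∀ i, ∀ k ≤ N, Pb i k =
    Qbar S + (Abar S i)ᵀ * (∑ j, S.Pr i j • Pb j (k + 1)) * Abar S i
      - ((Bbar S)ᵀ * (∑ j, S.Pr i j • Pb j (k + 1)) * Abar S i)ᵀ *
          (S.R + (Bbar S)ᵀ * (∑ j, S.Pr i j • Pb j (k + 1)) * Bbar S)⁻¹ *
          ((Bbar S)ᵀ * (∑ j, S.Pr i j • Pb j (k + 1)) * Abar S i)

/-- `Ῡ_i(k)` of the augmented recursion. -/
def AugRic.Ups {S : MJParams} {N : ℕ} (a : AugRic S N) (i : Fin S.L) (k : ℕ) :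
    Matrix (Fin S.m) (Fin S.m) ℝ :=
  S.R + (Bbar S)ᵀ * (∑ j, S.Pr i j • a.Pb j (k + 1)) * Bbar S

/-- Block `(1,0)` of an augmented matrix. -/
def blk10 (S : MJParams) (Pm : Matrix (AugIx S) (AugIx S) ℝ) :
    Matrix (Fin S.m) (Fin S.n) ℝ :=
  Matrix.of fun a b => Pm (Sum.inr (⟨0, S.hd⟩, a)) (Sum.inl b)

/-- Block `(1,1)` of an augmented matrix. -/
def blk11 (S : MJParams) (Pm : Matrix (AugIx S) (AugIx S) ℝ) :
    Matrix (Fin S.m) (Fin S.m) ℝ :=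
  Matrix.of fun a b => Pm (Sum.inr (⟨0, S.hd⟩, a)) (Sum.inr (⟨0, S.hd⟩, b))

/-- Block `(1, r+1)` of an augmented matrix (for `r < d`). -/
def blk1c (S : MJParams) (Pm : Matrix (AugIx S) (AugIx S) ℝ) (r : ℕ) :
    Matrix (Fin S.m) (Fin S.m) ℝ :=
  Matrix.of fun a b =>
    Pm (Sum.inr (⟨0, S.hd⟩, a)) (Sum.inr (if h : r < S.d then ⟨r, h⟩ else ⟨0, S.hd⟩, b))

/-- The initial augmented state `col(x₀, u(-1), …, u(-d))`. -/
def augInit (S : MJParams) (x0 : Fin S.n → ℝ) (uinit : ℤ → Fin S.m → ℝ) :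
    AugIx S → ℝ :=
  fun a =>
    match a with
    | Sum.inl a => x0 a
    | Sum.inr (t, b) => uinit (-(t : ℤ) - 1) b

end

/-!
Both identities are proved by strong induction on the length of the mode path, after unrolling
the recursions that define `δ` and `α`.

The key computation unrolls `δ^m` along all paths continuing a given prefix: by the tower
property of the path expectations `E_i^{(s)}`, `E[G δ^mᵀ]` becomes an expectation of `P - P0`
at the end of the path minus expectations of the products `T0ᵀ W⁻¹ T` at the intermediate
times. Up to transposition and reindexing, these are the terms of the recursions defining `T0`
and `T^r`; transposition is harmless because `W` and `P - P0` are symmetric, by backward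
induction in time from the symmetry of `Q` and `R`. With a one-step prefix this gives
`∑_j λ_{ij} A_jᵀ δ^{d-1}_j(k)ᵀ = T0_i(k-1)ᵀ`, so in (1) the first correction term of `α`
cancels the `T0`-term of the recursion for `δ`, and the induction hypothesis handles the other
correction terms. In (2), the `δ`-part of `α^{d-r}` produces the first two sums of the recursion
for `T^r`, and the induction hypothesis, applied to path suffixes, produces the third.
-/

namespace Matrix

theorem isSymm_sum {α n R : Type*} [AddCommMonoid R] (F : Finset α) {f : α → Matrix n n R}
    (hf : ∀ x ∈ F, (f x).IsSymm) : (∑ x ∈ F, f x).IsSymm :=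
  Finset.sum_induction f IsSymm (fun _ _ => IsSymm.add) isSymm_zero hf

variable {ι κ μ R : Type*} [Fintype ι] [CommSemiring R]

theorem IsSymm.transpose_mul_mul {M : Matrix ι ι R} (hM : M.IsSymm) (X : Matrix ι κ R)
    (Y : Matrix ι μ R) : (Xᵀ * M * Y)ᵀ = Yᵀ * M * X := by
  rw [transpose_mul, transpose_mul, transpose_transpose, hM.eq, Matrix.mul_assoc]

theorem IsSymm.transpose_mul_mul_self {M : Matrix ι ι R} (hM : M.IsSymm) (X : Matrix ι κ R) :
    (Xᵀ * M * X).IsSymm :=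
  hM.transpose_mul_mul X X

end Matrix

theorem Finset.sum_Icc_one_eq_sum_range_sub {M : Type*} [AddCommMonoid M] (n : ℕ)
    (f : ℕ → M) : ∑ s ∈ Finset.Icc 1 n, f s = ∑ t ∈ Finset.range n, f (n - t) := by
  refine Finset.sum_nbij' (fun s => n - s) (fun t => n - t) ?_ ?_ ?_ ?_ ?_ <;>
    intro s hs <;> simp only [Finset.mem_Icc, Finset.mem_range] at hs ⊢
  · omega
  · omega
  · omega
  · omega
  · rw [Nat.sub_sub_self hs.2]

theorem Finset.sum_Icc_add_right {M : Type*} [AddCommMonoid M] (a b c : ℕ) (f : ℕ → M) :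
    ∑ s ∈ Finset.Icc (a + c) (b + c), f s = ∑ u ∈ Finset.Icc a b, f (u + c) := by
  rw [← Finset.map_add_right_Icc, Finset.sum_map]
  rfl

namespace MJParams

variable {S : MJParams}

def endMode (S : MJParams) (i : Fin S.L) {s : ℕ} (p : Fin s → Fin S.L) : Fin S.L :=
  if s = 0 then i else S.pget p (s - 1)

/-- `Fin.append` with the length of the result only propositionally equal to `a + b`. -/
def joinPath {a b r : ℕ} (h : a + b = r) (p : Fin a → Fin S.L) (q : Fin b → Fin S.L) :
    Fin r → Fin S.L :=
  Fin.append p q ∘ Fin.cast h.symm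

theorem pget_of_lt {s : ℕ} (p : Fin s → Fin S.L) {t : ℕ} (h : t < s) :
    S.pget p t = p ⟨t, h⟩ :=
  dif_pos h

theorem pget_of_le {s : ℕ} (p : Fin s → Fin S.L) {t : ℕ} (h : s ≤ t) :
    S.pget p t = S.dflt :=
  dif_neg h.not_gt

theorem pget_val {s : ℕ} (p : Fin s → Fin S.L) (t : Fin s) : S.pget p t = p t :=
  pget_of_lt p t.isLt

theorem pget_cons_zero {s : ℕ} (j : Fin S.L) (q : Fin s → Fin S.L) :
    S.pget (Fin.cons j q : Fin (s + 1) → Fin S.L) 0 = j :=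
  pget_of_lt _ s.succ_pos

theorem pget_cons_succ {s : ℕ} (j : Fin S.L) (q : Fin s → Fin S.L) (t : ℕ) :
    S.pget (Fin.cons j q : Fin (s + 1) → Fin S.L) (t + 1) = S.pget q t := by
  by_cases ht : t < s
  · rw [pget_of_lt _ ht, pget_of_lt _ (by omega : t + 1 < s + 1)]
    exact Fin.cons_succ (α := fun _ => Fin S.L) j q ⟨t, ht⟩
  · rw [pget_of_le _ (by omega : s + 1 ≤ t + 1), pget_of_le _ (by omega)]

theorem pget_cons_of_pos {s t : ℕ} (j : Fin S.L) (q : Fin s → Fin S.L) (ht : 0 < t) :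
    S.pget (Fin.cons j q : Fin (s + 1) → Fin S.L) t = S.pget q (t - 1) := by
  obtain ⟨t, rfl⟩ := Nat.exists_eq_add_one_of_ne_zero ht.ne'
  exact pget_cons_succ j q t

theorem pget_joinPath_of_lt {a b r : ℕ} (h : a + b = r) (p : Fin a → Fin S.L)
    (q : Fin b → Fin S.L) {t : ℕ} (ht : t < a) : S.pget (joinPath h p q) t = S.pget p t := by
  subst h
  rw [pget_of_lt _ (by omega), pget_of_lt _ ht]
  exact Fin.append_left p q ⟨t, ht⟩

theorem pget_joinPath_add {a b r : ℕ} (h : a + b = r) (p : Fin a → Fin S.L)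
    (q : Fin b → Fin S.L) (t : ℕ) : S.pget (joinPath h p q) (a + t) = S.pget q t := by
  subst h
  by_cases ht : t < b
  · rw [pget_of_lt _ (by omega), pget_of_lt _ ht]
    exact Fin.append_right p q ⟨t, ht⟩
  · rw [pget_of_le _ (by omega), pget_of_le _ (by omega)]

theorem restrict_joinPath {a b r : ℕ} (h : a + b = r) (p : Fin a → Fin S.L)
    (q : Fin b → Fin S.L) : (fun t : Fin a => S.pget (joinPath h p q) t) = p := by
  funext t
  rw [pget_joinPath_of_lt h p q t.isLt, pget_val]

theorem pget_fun_of_lt {a : ℕ} (F : ℕ → Fin S.L) {t : ℕ} (ht : t < a) :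
    S.pget (fun t' : Fin a => F t') t = F t :=
  pget_of_lt _ ht

theorem restrict_self {s : ℕ} (p : Fin s → Fin S.L) : (fun t : Fin s => S.pget p t) = p :=
  funext (pget_val p)

theorem restrict_restrict {a b s : ℕ} (hab : a ≤ b) (w : Fin s → Fin S.L) :
    (fun t : Fin a => S.pget (fun t' : Fin b => S.pget w t') t) = fun t : Fin a => S.pget w t :=
  funext fun t => pget_fun_of_lt _ (by omega)

theorem restrict_cons {s u : ℕ} (j : Fin S.L) (q : Fin s → Fin S.L) :
    (fun t : Fin (u + 1) => S.pget (Fin.cons j q : Fin (s + 1) → Fin S.L) t) =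
      Fin.cons j (fun t : Fin u => S.pget q t) := by
  funext t
  refine Fin.cases ?_ (fun t => ?_) t
  · simp [pget_cons_zero]
  · simp [pget_cons_succ]

theorem endMode_of_pos {s : ℕ} (i : Fin S.L) (p : Fin s → Fin S.L) (hs : 0 < s) :
    S.endMode i p = S.pget p (s - 1) :=
  if_neg hs.ne'

theorem endMode_zero (i : Fin S.L) (p : Fin 0 → Fin S.L) : S.endMode i p = i :=
  if_pos rfl

theorem Aprod_zero {s : ℕ} (w : Fin s → Fin S.L) (a : ℕ) : S.Aprod w a 0 = 1 :=
  rfl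

theorem Aprod_succ {s : ℕ} (w : Fin s → Fin S.L) (a c : ℕ) :
    S.Aprod w a (c + 1) = S.Aprod w (a + 1) c * S.Aget w a := by
  simp only [Aprod, List.range_succ, List.map_append, List.prod_append, List.map_cons,
    List.map_nil, List.prod_cons, List.prod_nil, Matrix.mul_one,
    show a + (c + 1) = a + 1 + c by omega, show a + 1 + c - 1 - c = a by omega]

theorem Aprod_one {s : ℕ} (w : Fin s → Fin S.L) (a : ℕ) : S.Aprod w a 1 = S.Aget w a := by
  rw [Aprod_succ, Aprod_zero, Matrix.one_mul]

theorem Aprod_eq_mul_Aget {s : ℕ} (w : Fin s → Fin S.L) (a : ℕ) {c : ℕ} (hc : 0 < c) :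
    S.Aprod w a c = S.Aprod w (a + 1) (c - 1) * S.Aget w a := by
  obtain ⟨c, rfl⟩ := Nat.exists_eq_add_one_of_ne_zero hc.ne'
  exact Aprod_succ w a c

theorem Bget_restrict {a s : ℕ} (w : Fin s → Fin S.L) {u : ℕ} (hu : u < a) :
    S.Bget (fun t : Fin a => S.pget w t) u = S.Bget w u :=
  congrArg S.B (pget_fun_of_lt _ hu)

theorem pw_eq_prod_range {s : ℕ} (i : Fin S.L) (p : Fin s → Fin S.L) :
    S.pw i p = ∏ t ∈ Finset.range s,
      S.Pr (if t = 0 then i else S.pget p (t - 1)) (S.pget p t) := by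
  rw [pw, ← Fin.prod_univ_eq_prod_range]
  refine Finset.prod_congr rfl fun t _ => ?_
  by_cases h : (t : ℕ) = 0
  · rw [dif_pos h, if_pos h, pget_val]
  · rw [dif_neg h, if_neg h, pget_val, pget_of_lt _ (by omega : (t : ℕ) - 1 < s)]

theorem pw_joinPath {a b r : ℕ} (h : a + b = r) (i : Fin S.L) (p : Fin a → Fin S.L)
    (q : Fin b → Fin S.L) : S.pw i (joinPath h p q) = S.pw i p * S.pw (S.endMode i p) q := by
  subst h
  rw [pw_eq_prod_range, pw_eq_prod_range, pw_eq_prod_range, Finset.prod_range_add]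
  congr 1
  · refine Finset.prod_congr rfl fun t ht => ?_
    rw [Finset.mem_range] at ht
    rw [pget_joinPath_of_lt _ _ _ ht]
    split_ifs
    · rfl
    · rw [pget_joinPath_of_lt _ _ _ (by omega)]
  · refine Finset.prod_congr rfl fun t _ => ?_
    rw [pget_joinPath_add]
    congr 1
    rcases Nat.eq_zero_or_pos t with rfl | ht
    · rcases Nat.eq_zero_or_pos a with rfl | ha
      · simp [endMode_zero]
      · rw [Nat.add_zero, if_pos rfl, if_neg (by omega), endMode_of_pos _ _ ha,
          pget_joinPath_of_lt _ _ _ (by omega)]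
    · rw [if_neg (by omega), if_neg (by omega), show a + t - 1 = a + (t - 1) by omega,
        pget_joinPath_add]

theorem pw_cons {s : ℕ} (i j : Fin S.L) (q : Fin s → Fin S.L) :
    S.pw i (Fin.cons j q : Fin (s + 1) → Fin S.L) = S.Pr i j * S.pw j q := by
  rw [pw_eq_prod_range, pw_eq_prod_range, Finset.prod_range_succ', mul_comm (S.Pr i j)]
  congr 1
  · refine Finset.prod_congr rfl fun t _ => ?_
    rw [if_neg t.succ_ne_zero, Nat.add_sub_cancel, pget_cons_succ]
    rcases Nat.eq_zero_or_pos t with rfl | ht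
    · rw [pget_cons_zero, if_pos rfl]
    · rw [pget_cons_of_pos _ _ ht, if_neg ht.ne']

theorem expect_joinPath {α : Type*} [AddCommMonoid α] [Module ℝ α] {a b r : ℕ}
    (h : a + b = r) (i : Fin S.L) (f : (Fin r → Fin S.L) → α) :
    S.expect i r f =
      S.expect i a (fun p => S.expect (S.endMode i p) b (fun q => f (joinPath h p q))) := by
  subst h
  simp only [expect, Finset.smul_sum, smul_smul, ← pw_joinPath]
  rw [← Fintype.sum_prod_type', ← (Fin.appendEquiv a b).sum_comp]
  rfl

theorem expect_cons {α : Type*} [AddCommMonoid α] [Module ℝ α] {s : ℕ} (i : Fin S.L)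
    (f : (Fin (s + 1) → Fin S.L) → α) :
    S.expect i (s + 1) f = ∑ j, S.Pr i j • S.expect j s (fun q => f (Fin.cons j q)) := by
  simp only [expect, Finset.smul_sum, smul_smul, ← pw_cons]
  rw [← Fintype.sum_prod_type', ← (Fin.consEquiv fun _ => Fin S.L).sum_comp]
  rfl

theorem expect_zero {α : Type*} [AddCommMonoid α] [Module ℝ α] (i : Fin S.L)
    (f : (Fin 0 → Fin S.L) → α) : S.expect i 0 f = f Fin.elim0 := by
  rw [expect, Fintype.sum_unique, Subsingleton.elim default Fin.elim0, pw,
    Finset.prod_of_isEmpty, one_smul]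

theorem expect_one {α : Type*} [AddCommMonoid α] [Module ℝ α] (i : Fin S.L)
    (f : (Fin 1 → Fin S.L) → α) : S.expect i 1 f = ∑ j, S.Pr i j • f (fun _ => j) := by
  rw [expect_cons]
  refine Finset.sum_congr rfl fun j _ => ?_
  rw [expect_zero]
  congr 2
  exact funext (Fin.forall_fin_one.mpr rfl)

theorem expect_extend {α : Type*} [AddCommMonoid α] [Module ℝ α] {a r : ℕ} (h : a + 1 = r)
    (i : Fin S.L) (F : (Fin a → Fin S.L) → Fin S.L → α) :
    S.expect i r (fun w => F (fun t => S.pget w t) (S.pget w a)) =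
      S.expect i a (fun p => ∑ j, S.Pr (S.endMode i p) j • F p j) := by
  rw [expect_joinPath h]
  congr 1
  funext p
  rw [expect_one]
  refine Finset.sum_congr rfl fun j _ => ?_
  have hj : S.pget (joinPath h p fun _ => j) a = j := by
    simpa [pget_of_lt] using pget_joinPath_add h p (fun _ : Fin 1 => j) 0
  rw [restrict_joinPath, hj]

section Linearity

variable {α : Type*} [AddCommGroup α] [Module ℝ α] {s : ℕ} (i : Fin S.L)

theorem expect_congr {f g : (Fin s → Fin S.L) → α} (h : ∀ q, f q = g q) :
    S.expect i s f = S.expect i s g := by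
  rw [funext h]

theorem expect_sub (f g : (Fin s → Fin S.L) → α) :
    S.expect i s (fun q => f q - g q) = S.expect i s f - S.expect i s g := by
  simp only [expect, smul_sub, Finset.sum_sub_distrib]

theorem expect_sum {ι : Type*} (F : Finset ι) (f : ι → (Fin s → Fin S.L) → α) :
    S.expect i s (fun q => ∑ t ∈ F, f t q) = ∑ t ∈ F, S.expect i s (f t) := by
  simp only [expect, Finset.smul_sum]
  exact Finset.sum_comm

end Linearity

section MatrixValued

variable {ι κ μ : Type*} {s : ℕ} (i : Fin S.L)

theorem transpose_expect (f : (Fin s → Fin S.L) → Matrix ι κ ℝ) :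
    (S.expect i s f)ᵀ = S.expect i s (fun q => (f q)ᵀ) := by
  simp only [expect, transpose_sum, transpose_smul]

theorem isSymm_expect {f : (Fin s → Fin S.L) → Matrix κ κ ℝ} (hf : ∀ q, (f q).IsSymm) :
    (S.expect i s f).IsSymm := by
  rw [IsSymm, transpose_expect]
  exact expect_congr i fun q => (hf q).eq

variable [Fintype κ]

theorem expect_mul (X : Matrix κ μ ℝ) (f : (Fin s → Fin S.L) → Matrix ι κ ℝ) :
    S.expect i s f * X = S.expect i s (fun q => f q * X) := by
  simp only [expect, Matrix.sum_mul, Matrix.smul_mul]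

end MatrixValued

theorem expect_suffix_mul {ι κ μ : Type*} [Fintype κ] {u r : ℕ} (hur : u < r) (i : Fin S.L)
    (F : (Fin u → Fin S.L) → Matrix ι κ ℝ) (Y : Fin S.L → Matrix κ μ ℝ) :
    S.expect i r (fun q => F (fun t => S.pget q (r - u + t)) * Y (S.pget q (r - u - 1))) =
      S.expect i (r - u) (fun p => S.expect (S.endMode i p) u F * Y (S.endMode i p)) := by
  rw [S.expect_joinPath (show r - u + u = r by omega)]
  refine S.expect_congr i fun p => ?_
  rw [S.expect_mul, endMode_of_pos _ _ (by omega : 0 < r - u)]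
  refine S.expect_congr _ fun q => ?_
  simp only [pget_joinPath_add, restrict_self,
    pget_joinPath_of_lt _ _ _ (by omega : r - u - 1 < r - u)]

theorem expect_Bget_mul_reverse_mul {κ μ : Type*} [Fintype κ] {u r : ℕ} (hu : 1 ≤ u)
    (hur : u < r) (i : Fin S.L) (g : (Fin u → Fin S.L) → Matrix (Fin S.n) κ ℝ)
    (Y : Fin S.L → Matrix κ μ ℝ) :
    S.expect i r (fun q => (S.Bget q (r - 1))ᵀ * g (fun t : Fin u => S.pget q (r - 1 - t)) *
        Y (S.pget q (r - 1 - u))) =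
      S.expect i (r - u) (fun p => S.expect (S.endMode i p) u
        (fun s => (S.Bget s (u - 1))ᵀ * g (fun t : Fin u => S.pget s (u - 1 - t))) *
          Y (S.endMode i p)) := by
  rw [← S.expect_suffix_mul hur]
  refine S.expect_congr i fun q => ?_
  have hpath : (fun t : Fin u => S.pget (fun t' : Fin u => S.pget q (r - u + t')) (u - 1 - t)) =
      fun t : Fin u => S.pget q (r - 1 - t) :=
    funext fun t => by
      rw [pget_of_lt _ (by omega), Fin.val_mk, show r - u + (u - 1 - t) = r - 1 - t by omega]
  simp only [hpath, Bget]
  rw [pget_of_lt _ (by omega : u - 1 < u), Fin.val_mk, show r - u + (u - 1) = r - 1 by omega,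
    show r - 1 - u = r - u - 1 by omega]

end MJParams

namespace CDRE

open MJParams

variable {S : MJParams} {N : ℤ} (c : CDRE S N)

theorem T_eq_zero {r : ℕ} (hr1 : 1 ≤ r) (hr2 : r ≤ S.d - 1) (i : Fin S.L) {τ : ℤ}
    (h1 : N - S.d < τ) (h2 : τ ≤ N) : c.T r i τ = 0 := by
  simpa using c.hTterm r hr1 hr2 i (N - τ) (by omega) (by omega)

theorem T0_eq_zero (i : Fin S.L) {τ : ℤ} (h1 : N - S.d < τ) (h2 : τ ≤ N) :
    c.T0 i τ = 0 := by
  simpa using c.hT0term i (N - τ) (by omega) (by omega)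

/-- Backward induction on the time `u`: `W (u - 1)` only involves `P - P0` and `W` at later
times, and `P - P0` at `u - 1` only involves `P - P0` at `u` and `W (u - 1)`. -/
theorem isSymm_P_sub_P0_and_W {u : ℤ} (hu : u ≤ N + 1) {v : ℤ} (hv : u ≤ v) :
    (0 ≤ v → v ≤ N → ∀ i, (c.P i v - c.P0 i v).IsSymm) ∧
      (-(S.d : ℤ) ≤ v → v ≤ N - S.d → ∀ i, (c.W i v).IsSymm) := by
  have hd := S.hd
  induction u, hu using Int.leInductionDown generalizing v with
  | base => exact ⟨fun _ _ => by omega, fun _ _ => by omega⟩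
  | pred u _ ih =>
    rcases (show u ≤ v ∨ v = u - 1 by omega) with hv | rfl
    · exact ih hv
    have hW : -(S.d : ℤ) ≤ u - 1 → u - 1 ≤ N - S.d → ∀ i, (c.W i (u - 1)).IsSymm := by
      intro h1 h2 i
      have h := c.hW i (u - 1 + S.d) (by omega) (by omega)
      rw [add_sub_cancel_right] at h
      rw [h]
      refine (S.isSymm_expect i fun q => ?_).sub (isSymm_sum _ fun s hs => ?_)
      · exact ((ih (by omega)).1 (by omega) (by omega) _ |>.transpose_mul_mul_self _).add
          S.hRsymm
      · refine S.isSymm_expect _ fun q => ?_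
        rw [Finset.mem_Icc] at hs
        by_cases hs' : u - 1 + S.d - s ≤ N - S.d
        · exact ((ih (by omega)).2 (by omega) hs' _).inv.transpose_mul_mul_self _
        · simp [c.T_eq_zero hs.1 hs.2 _ (τ := u - 1 + S.d - s) (by omega) (by omega)]
    refine ⟨fun h1 h2 i => ?_, hW⟩
    rcases (show u - 1 = N ∨ u - 1 < N by omega) with hN | hN
    · have h0 := c.hP0term i 0 le_rfl (by omega)
      rw [sub_zero] at h0
      simp [hN, c.hPterm, h0]
    · rw [c.hP i u (by omega) (by omega), c.hP0 i u (by omega) (by omega)]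
      refine (isSymm_sum _ fun j _ => ?_).sub ?_
      · exact (S.hQsymm.add ((ih le_rfl).1 (by omega) (by omega) j
          |>.transpose_mul_mul_self _)).smul _
      · by_cases hu' : u - 1 ≤ N - S.d
        · exact (hW (by omega) hu' i).inv.transpose_mul_mul_self _
        · simp [c.T0_eq_zero i (τ := u - 1) (by omega) (by omega)]

theorem isSymm_W (i : Fin S.L) {u : ℤ} (h1 : -(S.d : ℤ) ≤ u) (h2 : u ≤ N - S.d) :
    (c.W i u).IsSymm :=
  (c.isSymm_P_sub_P0_and_W (by have := S.hd; omega) le_rfl).2 h1 h2 i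

theorem isSymm_P_sub_P0 (i : Fin S.L) {u : ℤ} (h1 : 0 ≤ u) (h2 : u ≤ N) :
    (c.P i u - c.P0 i u).IsSymm :=
  (c.isSymm_P_sub_P0_and_W (by omega) le_rfl).1 h1 h2 i

theorem transpose_T_mul_inv_W_mul {κ : Type*} {s : ℕ} (hs1 : 1 ≤ s) (hs2 : s ≤ S.d - 1)
    (π : Fin S.L) {τ : ℤ} (h1 : -(S.d : ℤ) ≤ τ) (h2 : τ ≤ N)
    (X : Matrix (Fin S.m) κ ℝ) :
    ((c.T s π τ)ᵀ * (c.W π τ)⁻¹ * X)ᵀ = Xᵀ * (c.W π τ)⁻¹ * c.T s π τ := by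
  by_cases hτ : τ ≤ N - S.d
  · exact (c.isSymm_W π h1 hτ).inv.transpose_mul_mul _ _
  · simp [c.T_eq_zero hs1 hs2 π (by omega) h2]

/-- The recursions for `T0` and `T^r` (below), transposed and reindexed into the shape produced by
`expect_mul_transpose_delta` with a prefix of length `1`, resp. `r`. -/
theorem transpose_T0_eq (i : Fin S.L) {k : ℤ} (hk0 : 0 ≤ k + (S.d - 1 : ℕ))
    (hkN : k + (S.d - 1 : ℕ) ≤ N) :
    (c.T0 i (k - 1))ᵀ =
      S.expect i S.d (fun w => (S.A (S.pget w 0))ᵀ * (S.Aprod w 1 (S.d - 1))ᵀ *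
          ((c.P (S.pget w (S.d - 1)) (k + (S.d - 1 : ℕ)) -
              c.P0 (S.pget w (S.d - 1)) (k + (S.d - 1 : ℕ))) * S.Bget w (S.d - 1)))
      - ∑ t ∈ Finset.range (S.d - 1), S.expect i (1 + t) (fun w =>
          (S.A (S.pget w 0))ᵀ * (S.Aprod w 1 t)ᵀ * ((c.T0 (S.endMode i w) (k + t))ᵀ *
            (c.W (S.endMode i w) (k + t))⁻¹ * c.T (S.d - 1 - t) (S.endMode i w) (k + t))) := by
  have hd := S.hd
  have h := c.hT0 i (k + (S.d - 1 : ℕ)) hk0 hkN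
  rw [show k + ((S.d - 1 : ℕ) : ℤ) - S.d = k - 1 by omega] at h
  rw [h, transpose_sub, transpose_expect, transpose_sum, Finset.sum_Icc_one_eq_sum_range_sub]
  congr 1
  · refine S.expect_congr i fun w => ?_
    rw [Aprod_eq_mul_Aget w 0 hd]
    simp only [transpose_mul, transpose_transpose, (c.isSymm_P_sub_P0 _ hk0 hkN).eq, Aget,
      Matrix.mul_assoc, zero_add]
  · refine Finset.sum_congr rfl fun t ht => ?_
    rw [Finset.mem_range] at ht
    rw [show S.d - (S.d - 1 - t) = 1 + t by omega, transpose_expect]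
    refine S.expect_congr i fun w => ?_
    rw [endMode_of_pos _ _ (by omega : 0 < 1 + t),
      show k + ((S.d - 1 : ℕ) : ℤ) - ((S.d - 1 - t : ℕ) : ℤ) = k + t by omega,
      transpose_mul, c.transpose_T_mul_inv_W_mul (by omega) (by omega) _ (by omega) (by omega),
      Aprod_eq_mul_Aget w 0 (by omega : 0 < 1 + t), transpose_mul, show 1 + t - 1 = t by omega]
    simp only [Aget, Matrix.mul_assoc, zero_add]

theorem transpose_T_eq {r : ℕ} (hr1 : 1 ≤ r) (hr2 : r ≤ S.d - 1) (i : Fin S.L) {k : ℤ}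
    (hk0 : 0 ≤ k + (S.d - r : ℕ)) (hkN : k + (S.d - r : ℕ) ≤ N) :
    (c.T r i (k - r))ᵀ =
      S.expect i S.d (fun w => (S.Bget w (r - 1))ᵀ * (S.Aprod w r (S.d - r))ᵀ *
          ((c.P (S.pget w (S.d - 1)) (k + (S.d - r : ℕ)) -
              c.P0 (S.pget w (S.d - 1)) (k + (S.d - r : ℕ))) * S.Bget w (S.d - 1)))
      - ∑ t ∈ Finset.range (S.d - r), S.expect i (r + t) (fun w =>
          (S.Bget w (r - 1))ᵀ * (S.Aprod w r t)ᵀ * ((c.T0 (S.endMode i w) (k + t))ᵀ *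
            (c.W (S.endMode i w) (k + t))⁻¹ * c.T (S.d - r - t) (S.endMode i w) (k + t)))
      - ∑ u ∈ Finset.Icc 1 (r - 1), S.expect i (r - u) (fun w =>
          (c.T u (S.endMode i w) (k - u))ᵀ * (c.W (S.endMode i w) (k - u))⁻¹ *
            c.T (S.d - r + u) (S.endMode i w) (k - u)) := by
  have h := c.hT r hr1 hr2 i (k + (S.d - r : ℕ)) hk0 hkN
  rw [show k + ((S.d - r : ℕ) : ℤ) - S.d = k - r by omega] at h
  rw [h, transpose_sub, transpose_sub, transpose_expect, transpose_sum, transpose_sum,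
    Finset.sum_Icc_one_eq_sum_range_sub,
    show Finset.Icc (S.d - r + 1) (S.d - 1) = Finset.Icc (1 + (S.d - r)) (r - 1 + (S.d - r)) by
      congr 1 <;> omega,
    Finset.sum_Icc_add_right]
  congr 1
  congr 1
  · refine S.expect_congr i fun w => ?_
    simp only [transpose_mul, transpose_transpose, (c.isSymm_P_sub_P0 _ hk0 hkN).eq,
      Matrix.mul_assoc]
  · refine Finset.sum_congr rfl fun t ht => ?_
    rw [Finset.mem_range] at ht
    rw [show S.d - (S.d - r - t) = r + t by omega, transpose_expect]
    refine S.expect_congr i fun w => ?_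
    rw [endMode_of_pos _ _ (by omega : 0 < r + t), Nat.add_sub_cancel_left,
      show k + ((S.d - r : ℕ) : ℤ) - ((S.d - r - t : ℕ) : ℤ) = k + t by omega,
      transpose_mul, c.transpose_T_mul_inv_W_mul (by omega) (by omega) _ (by omega) (by omega),
      transpose_mul, Matrix.mul_assoc]
  · refine Finset.sum_congr rfl fun u hu => ?_
    rw [Finset.mem_Icc] at hu
    rw [show S.d - (u + (S.d - r)) = r - u by omega, transpose_expect]
    refine S.expect_congr i fun w => ?_
    rw [endMode_of_pos _ _ (by omega : 0 < r - u), Nat.add_sub_cancel,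
      show k + ((S.d - r : ℕ) : ℤ) - ((u + (S.d - r) : ℕ) : ℤ) = k - u by omega,
      c.transpose_T_mul_inv_W_mul (by omega) (by omega) _ (by omega) (by omega),
      add_comm u]

end CDRE

namespace CDREX

open MJParams

variable {S : MJParams} {N : ℤ} (c : CDREX S N)

theorem transpose_delta_one (hd : 2 ≤ S.d) (i : Fin S.L) {τ : ℤ} (h1 : -1 ≤ τ)
    (h2 : τ + 1 ≤ N) :
    (c.δ 1 i τ)ᵀ = ∑ j, S.Pr i j • ((S.A j)ᵀ * (c.P j (τ + 1) - c.P0 j (τ + 1)) * S.B j)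
      - (c.T0 i τ)ᵀ * (c.W i τ)⁻¹ * c.T 1 i τ := by
  simpa only [add_sub_cancel_right] using c.hδ1 (by omega) i (τ + 1) (by omega) h2

theorem transpose_delta_succ {m : ℕ} (hm1 : 1 ≤ m) (hm : m + 1 ≤ S.d - 1) (i : Fin S.L)
    {τ : ℤ} (h1 : -1 ≤ τ) (h2 : τ + 1 ≤ N) :
    (c.δ (m + 1) i τ)ᵀ = ∑ j, S.Pr i j • ((S.A j)ᵀ * (c.δ m j (τ + 1))ᵀ)
      - (c.T0 i τ)ᵀ * (c.W i τ)⁻¹ * c.T (m + 1) i τ := by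
  simpa only [add_sub_cancel_right, Nat.add_sub_cancel] using
    c.hδr (m + 1) (by omega) hm i (τ + 1) (by omega) h2

/-- Induction on `m` for all prefix lengths `a` at once: one step of the recursion for `δ` extends
the prefix by one mode, whose `Aᵀ` is absorbed into `G`. -/
theorem expect_mul_transpose_delta {ι : Type*} {m : ℕ} (hm1 : 1 ≤ m) (hm : m ≤ S.d - 1)
    {a r : ℕ} (h : a + m = r) (G : (Fin a → Fin S.L) → Matrix ι (Fin S.n) ℝ) (i : Fin S.L)
    {τ : ℤ} (hτ : -1 ≤ τ) (hτN : τ + m ≤ N) :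
    S.expect i a (fun p => G p * (c.δ m (S.endMode i p) τ)ᵀ) =
      S.expect i r (fun w => G (fun t => S.pget w t) * (S.Aprod w a m)ᵀ *
          ((c.P (S.pget w (r - 1)) (τ + m) - c.P0 (S.pget w (r - 1)) (τ + m)) *
            S.Bget w (r - 1)))
      - ∑ t ∈ Finset.range m, S.expect i (a + t) (fun w => G (fun t' => S.pget w t') *
          (S.Aprod w a t)ᵀ * ((c.T0 (S.endMode i w) (τ + t))ᵀ *
            (c.W (S.endMode i w) (τ + t))⁻¹ * c.T (m - t) (S.endMode i w) (τ + t))) := by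
  induction m, hm1 using Nat.le_induction generalizing a r G τ with
  | base =>
    have hδ : ∀ p : Fin a → Fin S.L, G p * (c.δ 1 (S.endMode i p) τ)ᵀ =
        ∑ j, S.Pr (S.endMode i p) j •
          (G p * (S.A j)ᵀ * ((c.P j (τ + 1) - c.P0 j (τ + 1)) * S.B j))
        - G p * ((c.T0 (S.endMode i p) τ)ᵀ * (c.W (S.endMode i p) τ)⁻¹ *
            c.T 1 (S.endMode i p) τ) := by
      intro p
      rw [c.transpose_delta_one (by omega) _ hτ (by omega), Matrix.mul_sub, Matrix.mul_sum]
      simp only [Matrix.mul_smul, Matrix.mul_assoc]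
    rw [S.expect_congr i hδ, S.expect_sub, ← S.expect_extend h, Finset.sum_range_one]
    congr 1
    · refine S.expect_congr i fun w => ?_
      rw [show r - 1 = a by omega, Aprod_one, Nat.cast_one]
      rfl
    · simp only [Nat.cast_zero, add_zero, Nat.sub_zero, Aprod_zero, transpose_one,
        Matrix.mul_one, restrict_self]
      rfl
  | succ m hm1 ih =>
    have hδ : ∀ p : Fin a → Fin S.L, G p * (c.δ (m + 1) (S.endMode i p) τ)ᵀ =
        ∑ j, S.Pr (S.endMode i p) j • (G p * (S.A j)ᵀ * (c.δ m j (τ + 1))ᵀ)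
        - G p * ((c.T0 (S.endMode i p) τ)ᵀ * (c.W (S.endMode i p) τ)⁻¹ *
            c.T (m + 1) (S.endMode i p) τ) := by
      intro p
      rw [c.transpose_delta_succ hm1 hm _ hτ (by omega), Matrix.mul_sub, Matrix.mul_sum]
      simp only [Matrix.mul_smul, Matrix.mul_assoc]
    have hend : ∀ w : Fin (a + 1) → Fin S.L, S.endMode i w = S.pget w a := fun w => by
      rw [endMode_of_pos _ _ (by omega : 0 < a + 1), Nat.add_sub_cancel]
    have key := ih (by omega) (show a + 1 + m = r by omega)
      (fun w => G (fun t => S.pget w t) * (S.A (S.pget w a))ᵀ) (τ := τ + 1) (by omega)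
      (by push_cast at hτN ⊢; omega)
    simp only [hend] at key
    rw [S.expect_congr i hδ, S.expect_sub, ← S.expect_extend rfl, key, Finset.sum_range_succ',
      sub_add_eq_sub_sub]
    have hG : ∀ {s : ℕ} (w : Fin s → Fin S.L) (t : ℕ),
        G (fun t' : Fin a => S.pget (fun t'' : Fin (a + 1) => S.pget w t'') t') *
            (S.A (S.pget (fun t' : Fin (a + 1) => S.pget w t') a))ᵀ * (S.Aprod w (a + 1) t)ᵀ =
          G (fun t' => S.pget w t') * (S.Aprod w a (t + 1))ᵀ := fun w t => by
      rw [restrict_restrict a.le_succ, pget_fun_of_lt _ a.lt_succ_self, Aprod_succ,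
        transpose_mul, Matrix.mul_assoc]
      rfl
    congr 1
    congr 1
    · refine S.expect_congr i fun w => ?_
      rw [hG, show τ + 1 + (m : ℤ) = τ + ((m + 1 : ℕ) : ℤ) by push_cast; ring]
    · refine Finset.sum_congr rfl fun t _ => ?_
      rw [show a + 1 + t = a + (t + 1) by omega]
      refine S.expect_congr i fun w => ?_
      rw [hG, show τ + 1 + (t : ℤ) = τ + ((t + 1 : ℕ) : ℤ) by push_cast; ring,
        Nat.add_sub_add_right]
    · simp only [Nat.cast_zero, add_zero, Nat.sub_zero, Aprod_zero, transpose_one,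
        Matrix.mul_one, restrict_self]
      rfl

theorem sum_A_mul_transpose_delta (hd : 2 ≤ S.d) (i : Fin S.L) {k : ℤ} (hk : -1 ≤ k)
    (hkN : k ≤ N - S.d + 1) :
    ∑ j, S.Pr i j • ((S.A j)ᵀ * (c.δ (S.d - 1) j k)ᵀ) = (c.T0 i (k - 1))ᵀ := by
  have h := c.expect_mul_transpose_delta (m := S.d - 1) (by omega) le_rfl
    (show 1 + (S.d - 1) = S.d by omega) (fun p => (S.A (S.pget p 0))ᵀ) i hk (by omega)
  simp only [S.expect_one, endMode_of_pos _ _ Nat.one_pos, pget_fun_of_lt _ Nat.one_pos,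
    pget_of_lt _ Nat.one_pos, Nat.sub_self] at h
  rw [h, c.transpose_T0_eq i (by omega) (by omega)]

theorem transpose_alpha {j : ℕ} (hj1 : 1 ≤ j) (hj : j ≤ S.d - 1) (p : Fin j → Fin S.L)
    {τ : ℤ} (h1 : -1 ≤ τ) (h2 : τ + 1 ≤ N) :
    (c.α j p τ)ᵀ = (c.δ (S.d - j) (S.pget p 0) τ)ᵀ -
      ∑ s ∈ Finset.Icc 1 (j - 1), (c.α s (fun t : Fin s => S.pget p t) τ)ᵀ *
        (c.W (S.pget p s) (τ - s))⁻¹ * c.T (S.d - j + s) (S.pget p s) (τ - s) := by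
  rcases hj1.eq_or_lt with rfl | hj1
  · rw [c.hα1 hj, Finset.Icc_eq_empty (by omega), Finset.sum_empty, sub_zero]
    rfl
  · simpa only [add_sub_cancel_right] using c.hαj j hj1 hj p (τ + 1) (by omega) h2

theorem A_mul_transpose_alpha_cons {j : ℕ} (hj1 : 1 ≤ j) (hj : j + 1 ≤ S.d - 1)
    (p : Fin j → Fin S.L) (l : Fin S.L) {k : ℤ} (hk : -1 ≤ k) (hkN : k + 1 ≤ N) :
    (S.A l)ᵀ * (c.α (j + 1) (Fin.cons l p) k)ᵀ =
      (S.A l)ᵀ * (c.δ (S.d - (j + 1)) l k)ᵀ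
      - (S.A l)ᵀ * (c.δ (S.d - 1) l k)ᵀ *
          ((c.W (S.pget p 0) (k - 1))⁻¹ * c.T (S.d - j) (S.pget p 0) (k - 1))
      - ∑ u ∈ Finset.Icc 1 (j - 1),
          (S.A l)ᵀ * (c.α (u + 1) (Fin.cons l (fun t : Fin u => S.pget p t)) k)ᵀ *
            ((c.W (S.pget p u) (k - 1 - u))⁻¹ * c.T (S.d - j + u) (S.pget p u) (k - 1 - u)) := by
  rw [c.transpose_alpha (by omega) hj _ hk hkN, pget_cons_zero, Nat.add_sub_cancel,
    ← Finset.add_sum_Ioc_eq_sum_Icc hj1, ← Finset.Icc_add_one_left_eq_Ioc,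
    show Finset.Icc (1 + 1) j = Finset.Icc (1 + 1) (j - 1 + 1) by congr 1; omega,
    Finset.sum_Icc_add_right, c.hα1 (by omega)]
  simp only [Fin.val_zero, pget_cons_zero, pget_cons_of_pos l p (Nat.succ_pos _),
    restrict_cons, Nat.sub_self,
    Nat.cast_one, Nat.cast_add, show S.d - (j + 1) + 1 = S.d - j by omega]
  rw [Matrix.mul_sub, Matrix.mul_add, sub_add_eq_sub_sub, Matrix.mul_sum]
  congr 1
  · congr 1
    simp only [Matrix.mul_assoc]
  · refine Finset.sum_congr rfl fun u _ => ?_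
    rw [Nat.succ_sub_one, show S.d - (j + 1) + (u + 1) = S.d - j + u by omega,
      show k - ((u : ℤ) + 1) = k - 1 - u by ring]
    simp only [Matrix.mul_assoc]

theorem sum_A_mul_transpose_alpha_cons {j : ℕ} (hj1 : 1 ≤ j) (hj : j + 1 ≤ S.d - 1)
    (p : Fin j → Fin S.L) {k : ℤ} (hk : 0 ≤ k) (hkN : k ≤ N - S.d + 1) :
    ∑ l, S.Pr (S.pget p 0) l • ((S.A l)ᵀ * (c.α (j + 1) (Fin.cons l p) k)ᵀ) =
      (c.α j p (k - 1))ᵀ := by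
  induction j using Nat.strong_induction_on with
  | _ j ih =>
  have hδ : ∑ l, S.Pr (S.pget p 0) l • ((S.A l)ᵀ * (c.δ (S.d - (j + 1)) l k)ᵀ) =
      (c.δ (S.d - j) (S.pget p 0) (k - 1))ᵀ +
        (c.T0 (S.pget p 0) (k - 1))ᵀ * (c.W (S.pget p 0) (k - 1))⁻¹ *
          c.T (S.d - j) (S.pget p 0) (k - 1) := by
    have h := c.transpose_delta_succ (m := S.d - (j + 1)) (by omega) (by omega) (S.pget p 0)
      (τ := k - 1) (by omega) (by omega)
    rw [show S.d - (j + 1) + 1 = S.d - j by omega, sub_add_cancel] at h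
    rw [h, sub_add_cancel]
  have hT0 : ∀ Z : Matrix (Fin S.m) (Fin S.m) ℝ,
      ∑ l, S.Pr (S.pget p 0) l • ((S.A l)ᵀ * (c.δ (S.d - 1) l k)ᵀ * Z) =
        (c.T0 (S.pget p 0) (k - 1))ᵀ * Z := fun Z => by
    rw [← c.sum_A_mul_transpose_delta (by omega) _ (by omega) hkN, Matrix.sum_mul]
    simp only [Matrix.smul_mul]
  have hα : ∀ u ∈ Finset.Icc 1 (j - 1), ∀ Z : Matrix (Fin S.m) (Fin S.m) ℝ,
      ∑ l, S.Pr (S.pget p 0) l • ((S.A l)ᵀ *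
          (c.α (u + 1) (Fin.cons l (fun t : Fin u => S.pget p t)) k)ᵀ * Z) =
        (c.α u (fun t : Fin u => S.pget p t) (k - 1))ᵀ * Z := fun u hu Z => by
    rw [Finset.mem_Icc] at hu
    rw [← ih u (by omega) hu.1 (by omega), Matrix.sum_mul, pget_fun_of_lt _ (by omega)]
    simp only [Matrix.smul_mul]
  simp only [c.A_mul_transpose_alpha_cons hj1 hj p _ (k := k) (by omega) (by omega), smul_sub,
    Finset.sum_sub_distrib, Finset.smul_sum]
  rw [Finset.sum_comm, hδ, hT0, Finset.sum_congr rfl fun u hu => hα u hu _,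
    c.transpose_alpha hj1 (by omega) p (by omega) (by omega)]
  simp only [Matrix.mul_assoc]
  abel

theorem B_mul_transpose_alpha_reverse {r : ℕ} (hr1 : 1 ≤ r) (hr : r ≤ S.d - 1) (i : Fin S.L)
    (q : Fin r → Fin S.L) {k : ℤ} (hk : -1 ≤ k) (hkN : k + 1 ≤ N) :
    (S.Bget q (r - 1))ᵀ * (c.α r (fun t : Fin r => S.pget q (r - 1 - t)) k)ᵀ =
      (S.Bget q (r - 1))ᵀ * (c.δ (S.d - r) (S.endMode i q) k)ᵀ -
      ∑ u ∈ Finset.Icc 1 (r - 1), (S.Bget q (r - 1))ᵀ *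
        (c.α u (fun t : Fin u => S.pget q (r - 1 - t)) k)ᵀ *
        ((c.W (S.pget q (r - 1 - u)) (k - u))⁻¹ *
          c.T (S.d - r + u) (S.pget q (r - 1 - u)) (k - u)) := by
  rw [c.transpose_alpha hr1 hr _ hk hkN, endMode_of_pos _ _ hr1, Matrix.mul_sub,
    Matrix.mul_sum, pget_of_lt _ hr1, Nat.sub_zero]
  refine congrArg _ (Finset.sum_congr rfl fun u hu => ?_)
  rw [Finset.mem_Icc] at hu
  rw [pget_of_lt _ (by omega : u < r),
    show (fun t : Fin u => S.pget (fun t' : Fin r => S.pget q (r - 1 - t')) t) =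
      fun t : Fin u => S.pget q (r - 1 - t) from funext fun t => pget_of_lt _ (by omega)]
  simp only [Matrix.mul_assoc]

theorem expect_B_mul_transpose_alpha_reverse {r : ℕ} (hr1 : 1 ≤ r) (hr : r ≤ S.d - 1)
    (i : Fin S.L) {k : ℤ} (hk : -1 ≤ k) (hkN : k ≤ N - S.d + 1) :
    S.expect i r (fun q => (S.Bget q (r - 1))ᵀ *
        (c.α r (fun t : Fin r => S.pget q (r - 1 - t)) k)ᵀ) = (c.T r i (k - r))ᵀ := by
  induction r using Nat.strong_induction_on generalizing i with
  | _ r ih =>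
  rw [S.expect_congr i fun q => c.B_mul_transpose_alpha_reverse hr1 hr i q hk (by omega),
    S.expect_sub, S.expect_sum,
    c.expect_mul_transpose_delta (by omega) (by omega) (show r + (S.d - r) = S.d by omega) _ i hk
      (by omega),
    c.transpose_T_eq hr1 hr i (by omega) (by omega)]
  simp only [Bget_restrict _ (by omega : r - 1 < r)]
  congr 1
  refine Finset.sum_congr rfl fun u hu => ?_
  rw [Finset.mem_Icc] at hu
  rw [S.expect_Bget_mul_reverse_mul hu.1 (by omega) i (fun p => (c.α u p k)ᵀ)
    (fun e => (c.W e (k - u))⁻¹ * c.T (S.d - r + u) e (k - u))]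
  refine S.expect_congr i fun p => ?_
  rw [ih u (by omega) hu.1 (by omega), Matrix.mul_assoc]

end CDREX

/-- The paper's `r` is `r' + 1`. -/
theorem stmt14_general (S : MJParams)
    (N : ℤ) (c : CDREX S N)
    (r' : ℕ) (hr1 : 1 ≤ r') (hr2 : r' + 1 ≤ S.d - 1)
    (k : ℤ) (hk0 : 0 ≤ k) (hkN : k ≤ N - S.d + 1) :
    (∀ pth : Fin r' → Fin S.L,
      (∑ j, S.Pr (pth ⟨0, hr1⟩) j • ((S.A j)ᵀ * (c.α (r' + 1) (Fin.cons j pth) k)ᵀ))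
        = (c.α r' pth (k - 1))ᵀ) ∧
    (∀ i : Fin S.L,
      S.expect i (r' + 1) (fun q =>
        (S.Bget q r')ᵀ * (c.α (r' + 1) (fun t : Fin (r' + 1) => S.pget q (r' - (t : ℕ))) k)ᵀ)
        = (c.T (r' + 1) i (k - (r' + 1)))ᵀ) := by
  refine ⟨fun pth => ?_, fun i => ?_⟩
  · rw [← MJParams.pget_of_lt pth hr1]
    exact c.sum_A_mul_transpose_alpha_cons hr1 hr2 pth hk0 hkN
  · simpa using
      c.expect_B_mul_transpose_alpha_reverse (r := r' + 1) (by omega) hr2 i (by omega) hkN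

/-- stated with `r = r' + 1`, so that `2 ≤ r ≤ d-1` becomes `1 ≤ r' ≤ d-2` -/
theorem stmt14 (S : MJParams) (hd3 : 3 ≤ S.d) (hR : S.R.PosDef) (hQ : S.Q.PosSemidef)
    (N : ℤ) (hN : (S.d : ℤ) ≤ N) (c : CDREX S N)
    (r' : ℕ) (hr1 : 1 ≤ r') (hr2 : r' + 1 ≤ S.d - 1)
    (k : ℤ) (hk0 : 0 ≤ k) (hkN : k ≤ N - S.d + 1) :
    (∀ pth : Fin r' → Fin S.L,
      (∑ j, S.Pr (pth ⟨0, hr1⟩) j • ((S.A j)ᵀ * (c.α (r' + 1) (Fin.cons j pth) k)ᵀ))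
        = (c.α r' pth (k - 1))ᵀ) ∧
    (∀ i : Fin S.L,
      S.expect i (r' + 1) (fun q =>
        (S.Bget q r')ᵀ * (c.α (r' + 1) (fun t : Fin (r' + 1) => S.pget q (r' - (t : ℕ))) k)ᵀ)
        = (c.T (r' + 1) i (k - (r' + 1)))ᵀ) :=
  stmt14_general S N c r' hr1 hr2 k hk0 hkN
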